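/- arXiv:2208.12668 — 5 statements merged into one kernel-verified Lean document; each statement's English description precedes it below -/
import Mathlib

section
/- Let L be a real Lie algebra, J : L → L linear with J² = -id, N its Nijenhuis torsion, and L_N J the operator X ↦ [N,JX] - J[N,X]. Then for all N, X, Y ∈ L: [N(X,Y), N] = (L_N J)([JX,Y]) + (L_N J)([X,JY]) - (L_{(L_N J)(X)} J)(Y) + (L_{(L_N J)(Y)} J)(X) + N([X,N],Y) + N(X,[Y,N]). -/
/-!
Since `ad Z` is a derivation of the bracket and `N` is built from `J` and the bracket alone,
`ad Z` acts on `N` as a derivation up to the first variation of `N` in the direction of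
`[ad Z, J] = L_Z J`, and that variation is again expressed through Lie derivatives of `J`.
-/

namespace LieRing

variable {L : Type*} [LieRing L]

def nijenhuis (J : L →+ L) (X Y : L) : L :=
  ⁅J X, J Y⁆ - J ⁅J X, Y⁆ - J ⁅X, J Y⁆ - ⁅X, Y⁆

def lieDeriv (J : L →+ L) (V X : L) : L :=
  ⁅V, J X⁆ - J ⁅V, X⁆

variable (J : L →+ L)

theorem nijenhuis_neg_left (X Y : L) : nijenhuis J (-X) Y = -nijenhuis J X Y := by
  simp only [nijenhuis, map_neg, neg_lie, neg_sub]
  abel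

theorem nijenhuis_neg_right (X Y : L) : nijenhuis J X (-Y) = -nijenhuis J X Y := by
  simp only [nijenhuis, map_neg, lie_neg, neg_sub]
  abel

theorem lie_apply_eq_apply_lie_add_lieDeriv (Z W : L) :
    ⁅Z, J W⁆ = J ⁅Z, W⁆ + lieDeriv J Z W :=
  (add_sub_cancel _ _).symm

theorem lie_nijenhuis (Z X Y : L) :
    ⁅Z, nijenhuis J X Y⁆ =
      nijenhuis J ⁅Z, X⁆ Y + nijenhuis J X ⁅Z, Y⁆ +
        lieDeriv J (lieDeriv J Z X) Y - lieDeriv J (lieDeriv J Z Y) X -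
          lieDeriv J Z ⁅J X, Y⁆ - lieDeriv J Z ⁅X, J Y⁆ := by
  rw [lieDeriv.eq_1 J (lieDeriv J Z X), lieDeriv.eq_1 J (lieDeriv J Z Y)]
  simp only [nijenhuis, lie_sub, leibniz_lie Z, lie_apply_eq_apply_lie_add_lieDeriv J Z,
    map_add, map_neg, add_lie, lie_add, ← lie_skew (lieDeriv J Z Y)]
  abel

end LieRing

theorem bracket_nijenhuis_formula_general (L : Type*) [LieRing L] [LieAlgebra ℝ L]
    (J : L →ₗ[ℝ] L)
    (N : L → L → L)
    (hN : ∀ X Y, N X Y = ⁅J X, J Y⁆ - J ⁅J X, Y⁆ - J ⁅X, J Y⁆ - ⁅X, Y⁆)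
    (LJ : L → L → L)
    (hLJ : ∀ V X, LJ V X = ⁅V, J X⁆ - J ⁅V, X⁆) :
    ∀ Z X Y : L,
      ⁅N X Y, Z⁆ =
        LJ Z ⁅J X, Y⁆ + LJ Z ⁅X, J Y⁆ - LJ (LJ Z X) Y + LJ (LJ Z Y) X +
          N ⁅X, Z⁆ Y + N X ⁅Y, Z⁆ := by
  obtain rfl : N = LieRing.nijenhuis (J : L →+ L) := funext fun X => funext (hN X)
  obtain rfl : LJ = LieRing.lieDeriv (J : L →+ L) := funext fun V => funext (hLJ V)
  intro Z X Y
  rw [← lie_skew, LieRing.lie_nijenhuis, ← lie_skew X Z, ← lie_skew Y Z,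
    LieRing.nijenhuis_neg_left, LieRing.nijenhuis_neg_right]
  abel

/-- The bracket of a value of the Nijenhuis torsion with an arbitrary element `Z`:
`[N(X,Y), Z] = (L_Z J)([JX,Y]) + (L_Z J)([X,JY]) - (L_{(L_Z J)X} J)(Y)
  + (L_{(L_Z J)Y} J)(X) + N([X,Z],Y) + N(X,[Y,Z])`,
where `(L_V J)(X) = [V,JX] - J[V,X]`. -/
theorem bracket_nijenhuis_formula (L : Type*) [LieRing L] [LieAlgebra ℝ L]
    (J : L →ₗ[ℝ] L) (hJ : ∀ X, J (J X) = -X)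
    (N : L → L → L)
    (hN : ∀ X Y, N X Y = ⁅J X, J Y⁆ - J ⁅J X, Y⁆ - J ⁅X, J Y⁆ - ⁅X, Y⁆)
    (LJ : L → L → L)
    (hLJ : ∀ V X, LJ V X = ⁅V, J X⁆ - J ⁅V, X⁆) :
    ∀ Z X Y : L,
      ⁅N X Y, Z⁆ =
        LJ Z ⁅J X, Y⁆ + LJ Z ⁅X, J Y⁆ - LJ (LJ Z X) Y + LJ (LJ Z Y) X +
          N ⁅X, Z⁆ Y + N X ⁅Y, Z⁆ :=
  bracket_nijenhuis_formula_general L J N hN LJ hLJ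
end

section
/- Let L be a real Lie algebra, J : L → L linear with J² = -id, N its Nijenhuis torsion, and let D ⊆ L be the ℝ-linear span of all values N(X,Y). If for every Z ∈ D and every X ∈ L one has [Z,JX] - J[Z,X] ∈ D, then D is a Lie subalgebra of L (i.e. closed under the bracket). -/
/-!
The Lie derivative `ℒ_a J = [ad a, J]` measures the failure of `ad a` to commute with `J`. Since
`ad a` is a derivation of the bracket, expanding `[a, N(X,Y)]` gives
`N([a,X],Y) + N(X,[a,Y])` plus terms of the form `(ℒ_Z J) W` with `Z ∈ {a, (ℒ_a J) X, (ℒ_a J) Y}`.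
For `a ∈ D` all of these lie in `D`, so `ad a` maps the generators of `D`, hence `D`, into `D`.
-/

namespace LieAlgebra

variable {R L : Type*} [CommRing R] [LieRing L] [LieAlgebra R L] (J : L →ₗ[R] L)

def nijenhuis (X Y : L) : L :=
  ⁅J X, J Y⁆ - J ⁅J X, Y⁆ - J ⁅X, J Y⁆ - ⁅X, Y⁆

/-- `lieDerivOf J Z X = (ℒ_Z J) X`, the Lie derivative of the endomorphism `J` along `Z`. -/
def lieDerivOf (Z X : L) : L :=
  ⁅Z, J X⁆ - J ⁅Z, X⁆

theorem lie_nijenhuis (a X Y : L) :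
    ⁅a, nijenhuis J X Y⁆ =
      nijenhuis J ⁅a, X⁆ Y + nijenhuis J X ⁅a, Y⁆
        + lieDerivOf J (lieDerivOf J a X) Y - lieDerivOf J (lieDerivOf J a Y) X
        - lieDerivOf J a ⁅J X, Y⁆ - lieDerivOf J a ⁅X, J Y⁆ := by
  have hskew : lieDerivOf J (lieDerivOf J a Y) X =
      -(⁅J X, lieDerivOf J a Y⁆ - J ⁅X, lieDerivOf J a Y⁆) := by
    rw [lieDerivOf, ← lie_skew _ (J X), ← lie_skew _ X, map_neg]
    abel
  rw [hskew]
  simp only [nijenhuis, lieDerivOf, map_sub, lie_sub, sub_lie, lie_lie]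
  abel

theorem lie_nijenhuis_mem {D : Submodule R L} (hN : ∀ X Y, nijenhuis J X Y ∈ D)
    (hJ : ∀ Z ∈ D, ∀ X, lieDerivOf J Z X ∈ D) {a : L} (ha : a ∈ D) (X Y : L) :
    ⁅a, nijenhuis J X Y⁆ ∈ D := by
  have haX := hJ a ha X
  have haY := hJ a ha Y
  rw [lie_nijenhuis]
  exact sub_mem (sub_mem (sub_mem (add_mem (add_mem (hN _ _) (hN _ _)) (hJ _ haX Y))
    (hJ _ haY X)) (hJ a ha _)) (hJ a ha _)

end LieAlgebra

theorem imageNijenhuis_subalgebra_general (L : Type*) [LieRing L] [LieAlgebra ℝ L]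
    (J : L →ₗ[ℝ] L)
    (N : L → L → L)
    (hN : ∀ X Y, N X Y = ⁅J X, J Y⁆ - J ⁅J X, Y⁆ - J ⁅X, J Y⁆ - ⁅X, Y⁆)
    (D : Submodule ℝ L)
    (hD : D = Submodule.span ℝ {z : L | ∃ X Y : L, z = N X Y})
    (hLJ : ∀ Z ∈ D, ∀ X : L, ⁅Z, J X⁆ - J ⁅Z, X⁆ ∈ D) :
    ∀ a ∈ D, ∀ b ∈ D, ⁅a, b⁆ ∈ D := by
  intro a ha b hb
  obtain rfl : N = LieAlgebra.nijenhuis J := funext fun X => funext (hN X)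
  have hgen : ∀ X Y, LieAlgebra.nijenhuis J X Y ∈ D := fun X Y =>
    hD ▸ Submodule.subset_span ⟨X, Y, rfl⟩
  have hspan : D ≤ D.comap (LieAlgebra.ad ℝ L a) := by
    nth_rw 1 [hD]
    rw [Submodule.span_le]
    rintro _ ⟨X, Y, rfl⟩
    exact LieAlgebra.lie_nijenhuis_mem J hgen hLJ ha X Y
  exact hspan hb

/-- If the span `D` of the image of the Nijenhuis torsion of `J` satisfies
`[Z,JX] - J[Z,X] ∈ D` for all `Z ∈ D`, `X ∈ L`, then `D` is closed under the bracket. -/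
theorem imageNijenhuis_subalgebra (L : Type*) [LieRing L] [LieAlgebra ℝ L]
    (J : L →ₗ[ℝ] L) (hJ : ∀ X, J (J X) = -X)
    (N : L → L → L)
    (hN : ∀ X Y, N X Y = ⁅J X, J Y⁆ - J ⁅J X, Y⁆ - J ⁅X, J Y⁆ - ⁅X, Y⁆)
    (D : Submodule ℝ L)
    (hD : D = Submodule.span ℝ {z : L | ∃ X Y : L, z = N X Y})
    (hLJ : ∀ Z ∈ D, ∀ X : L, ⁅Z, J X⁆ - J ⁅Z, X⁆ ∈ D) :
    ∀ a ∈ D, ∀ b ∈ D, ⁅a, b⁆ ∈ D :=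
  imageNijenhuis_subalgebra_general L J N hN D hD hLJ
end

section
/- Let L be a real Lie algebra, J : L → L linear with J² = -id, N its Nijenhuis torsion, D = span of Im N, and Lℂ the complexification with T⁺ = {X - iJX : X ∈ L}. Then the ℂ-subspace T⁺ + Dℂ of Lℂ is closed under the Lie bracket if and only if D is a Lie subalgebra satisfying [Z,JX] - J[Z,X] ∈ D for all Z ∈ D and X ∈ L. -/
open TensorProduct

/-- Inclusion of a real vector space into its complexification. -/
noncomputable def incl {L : Type*} [AddCommGroup L] [Module ℝ L] (x : L) : ℂ ⊗[ℝ] L :=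
  (1 : ℂ) ⊗ₜ[ℝ] x

/-- `A⁺(X) = ½(X - iJX)` in the complexification. -/
noncomputable def Ap {L : Type*} [AddCommGroup L] [Module ℝ L] (J : L →ₗ[ℝ] L) (x : L) :
    ℂ ⊗[ℝ] L :=
  (1 / 2 : ℂ) • (incl x - Complex.I • incl (J x))

/-- `A⁻(X) = ½(X + iJX)` in the complexification. -/
noncomputable def Am {L : Type*} [AddCommGroup L] [Module ℝ L] (J : L →ₗ[ℝ] L) (x : L) :
    ℂ ⊗[ℝ] L :=
  (1 / 2 : ℂ) • (incl x + Complex.I • incl (J x))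

/-!
Write `z ∈ Lℂ` as `x + i y`. Since `x - i J x ∈ T⁺`, one has `z ≡ i (J x + y)` modulo `T⁺`, so the
real-linear "residue" `z ↦ J x + y` identifies `Lℂ ⧸ T⁺` with `L`, and multiplication by `i` acts on
residues as `-J`. The torsion satisfies `J N(X, Y) = -N(J X, Y)`, so `D` is `J`-invariant, and then
`T⁺ + Dℂ` is exactly the set of `z` whose residue lies in `D`. Closure under the bracket only has
to be tested on generators, and the residues of their brackets are `N(J X, Y)` for two elements
of `T⁺`, `±([Z, J X] - J [Z, X])` for `Z ∈ D` against `X - i J X`, and `J [Z, W]` for `Z, W ∈ D`.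
-/

lemma lie_mem_of_mem_span {R A : Type*} [CommRing R] [LieRing A] [LieAlgebra R A]
    {s : Set A} {T : Submodule R A} (h : ∀ a ∈ s, ∀ b ∈ s, ⁅a, b⁆ ∈ T) {a b : A}
    (ha : a ∈ Submodule.span R s) (hb : b ∈ Submodule.span R s) : ⁅a, b⁆ ∈ T := by
  have : Submodule.map₂ (LieModule.toEnd R A A : A →ₗ[R] Module.End R A)
      (Submodule.span R s) (Submodule.span R s) ≤ T := by
    rw [Submodule.map₂_span_span, Submodule.span_le]
    rintro _ ⟨a, ha, b, hb, rfl⟩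
    exact h a ha b hb
  exact Submodule.map₂_le.mp this a ha b hb

section Complexification

variable {L : Type*} [AddCommGroup L] [Module ℝ L]

noncomputable def complexRe : ℂ ⊗[ℝ] L →ₗ[ℝ] L :=
  TensorProduct.lift ((LinearMap.lsmul ℝ L).comp Complex.reLm)

noncomputable def complexIm : ℂ ⊗[ℝ] L →ₗ[ℝ] L :=
  TensorProduct.lift ((LinearMap.lsmul ℝ L).comp Complex.imLm)

@[simp] lemma complexRe_tmul (c : ℂ) (x : L) : complexRe (c ⊗ₜ[ℝ] x) = c.re • x := rfl

@[simp] lemma complexIm_tmul (c : ℂ) (x : L) : complexIm (c ⊗ₜ[ℝ] x) = c.im • x := rfl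

@[simp] lemma complexRe_incl (x : L) : complexRe (incl x) = x := by simp [incl]

@[simp] lemma complexIm_incl (x : L) : complexIm (incl x) = 0 := by simp [incl]

@[simp] lemma complexRe_I_smul (z : ℂ ⊗[ℝ] L) : complexRe (Complex.I • z) = -complexIm z := by
  induction z using TensorProduct.induction_on with
  | zero => simp
  | tmul c x => simp [smul_tmul']
  | add a b ha hb => simp only [smul_add, map_add, ha, hb, neg_add]

@[simp] lemma complexIm_I_smul (z : ℂ ⊗[ℝ] L) : complexIm (Complex.I • z) = complexRe z := by
  induction z using TensorProduct.induction_on with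
  | zero => simp
  | tmul c x => simp [smul_tmul']
  | add a b ha hb => simp only [smul_add, map_add, ha, hb]

lemma incl_complexRe_add_I_smul_incl_complexIm (z : ℂ ⊗[ℝ] L) :
    incl (complexRe z) + Complex.I • incl (complexIm z) = z := by
  induction z using TensorProduct.induction_on with
  | zero => simp [incl]
  | tmul c x =>
    rw [complexRe_tmul, complexIm_tmul, incl, incl, tmul_smul, tmul_smul, smul_tmul', smul_tmul',
      smul_tmul', ← add_tmul]
    congr 1
    simp [Complex.ext_iff]
  | add a b ha hb =>
    conv_rhs => rw [← ha, ← hb]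
    simp only [incl, map_add, tmul_add, smul_add]
    abel

end Complexification

section Residue

variable {L : Type*} [AddCommGroup L] [Module ℝ L] (J : L →ₗ[ℝ] L)

noncomputable def residueModTPlus : ℂ ⊗[ℝ] L →ₗ[ℝ] L := J ∘ₗ complexRe + complexIm

lemma residueModTPlus_apply (z : ℂ ⊗[ℝ] L) :
    residueModTPlus J z = J (complexRe z) + complexIm z := rfl

@[simp] lemma residueModTPlus_incl (x : L) : residueModTPlus J (incl x) = J x := by
  simp [residueModTPlus_apply]

@[simp] lemma residueModTPlus_I_smul_incl (x : L) :
    residueModTPlus J (Complex.I • incl x) = x := by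
  simp [residueModTPlus_apply]

lemma residueModTPlus_I_smul (hJ : ∀ x, J (J x) = -x) (z : ℂ ⊗[ℝ] L) :
    residueModTPlus J (Complex.I • z) = -J (residueModTPlus J z) := by
  simp only [residueModTPlus_apply, complexRe_I_smul, complexIm_I_smul, map_add, map_neg, hJ]
  abel

lemma eq_tPlus_add_I_smul_incl_residueModTPlus (z : ℂ ⊗[ℝ] L) :
    z = (incl (complexRe z) - Complex.I • incl (J (complexRe z)))
      + Complex.I • incl (residueModTPlus J z) := by
  conv_lhs => rw [← incl_complexRe_add_I_smul_incl_complexIm z]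
  simp only [residueModTPlus_apply, incl, tmul_add, smul_add]
  abel

variable {J}

noncomputable def residuePreimage (hJ : ∀ x, J (J x) = -x) (D : Submodule ℝ L)
    (hJD : ∀ z ∈ D, J z ∈ D) : Submodule ℂ (ℂ ⊗[ℝ] L) where
  carrier := {z | residueModTPlus J z ∈ D}
  add_mem' {a b} ha hb := by
    simpa only [Set.mem_ofPred_eq, map_add] using add_mem ha hb
  zero_mem' := by simp
  smul_mem' c z hz := by
    have hc : c • z = c.re • z + c.im • (Complex.I • z) := by
      rw [← algebraMap_smul ℂ c.re z, ← algebraMap_smul ℂ c.im, smul_smul, ← add_smul]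
      simp [Complex.re_add_im]
    simp only [Set.mem_ofPred_eq, hc, map_add, map_smul, residueModTPlus_I_smul J hJ]
    exact add_mem (D.smul_mem _ hz) (D.smul_mem _ (neg_mem (hJD _ hz)))

variable (hJ : ∀ x, J (J x) = -x) {D : Submodule ℝ L} (hJD : ∀ z ∈ D, J z ∈ D)

lemma mem_residuePreimage {z : ℂ ⊗[ℝ] L} :
    z ∈ residuePreimage hJ D hJD ↔ residueModTPlus J z ∈ D := Iff.rfl

lemma span_tPlus_sup_span_incl_eq_residuePreimage :
    Submodule.span ℂ {z | ∃ x : L, z = incl x - Complex.I • incl (J x)} ⊔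
      Submodule.span ℂ (incl '' (D : Set L)) = residuePreimage hJ D hJD := by
  apply le_antisymm
  · refine sup_le (Submodule.span_le.mpr ?_) (Submodule.span_le.mpr ?_)
    · rintro _ ⟨x, rfl⟩
      simp [mem_residuePreimage]
    · rintro _ ⟨x, hx, rfl⟩
      simpa [mem_residuePreimage] using hJD x hx
  · intro z hz
    rw [eq_tPlus_add_I_smul_incl_residueModTPlus J z]
    exact add_mem (Submodule.mem_sup_left (Submodule.subset_span ⟨_, rfl⟩))
      (Submodule.mem_sup_right (Submodule.smul_mem _ _ (Submodule.subset_span ⟨_, hz, rfl⟩)))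

end Residue

section Nijenhuis

variable {L : Type*} [LieRing L] [LieAlgebra ℝ L] (J : L →ₗ[ℝ] L)

def nijenhuis (x y : L) : L := ⁅J x, J y⁆ - J ⁅J x, y⁆ - J ⁅x, J y⁆ - ⁅x, y⁆

variable {J}

lemma map_nijenhuis (hJ : ∀ x, J (J x) = -x) (x y : L) :
    J (nijenhuis J x y) = -nijenhuis J (J x) y := by
  simp only [nijenhuis, map_sub, map_neg, hJ, neg_lie]
  abel

lemma map_mem_span_nijenhuis (hJ : ∀ x, J (J x) = -x) {z : L}
    (hz : z ∈ Submodule.span ℝ {w | ∃ x y : L, w = nijenhuis J x y}) :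
    J z ∈ Submodule.span ℝ {w | ∃ x y : L, w = nijenhuis J x y} := by
  induction hz using Submodule.span_induction with
  | mem w hw =>
    obtain ⟨x, y, rfl⟩ := hw
    rw [map_nijenhuis hJ]
    exact neg_mem (Submodule.subset_span ⟨J x, y, rfl⟩)
  | zero => simp
  | add a b _ _ ha hb => simpa only [map_add] using add_mem ha hb
  | smul r a _ ha => simpa only [map_smul] using Submodule.smul_mem _ r ha

end Nijenhuis

section ComplexifiedBracket

variable {L : Type*} [LieRing L] [LieAlgebra ℝ L]

/- The bracket on `ℂ ⊗[ℝ] L` elaborates to the base-change `Bracket` instance, against which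
`simp` and `rw` fail to match the generic `sub_lie`, `smul_lie`, …; these restate them for it. -/

lemma complexification_sub_lie (a b c : ℂ ⊗[ℝ] L) : ⁅a - b, c⁆ = ⁅a, c⁆ - ⁅b, c⁆ :=
  sub_lie a b c

lemma complexification_lie_sub (a b c : ℂ ⊗[ℝ] L) : ⁅a, b - c⁆ = ⁅a, b⁆ - ⁅a, c⁆ :=
  lie_sub a b c

lemma complexification_smul_lie (t : ℂ) (a b : ℂ ⊗[ℝ] L) : ⁅t • a, b⁆ = t • ⁅a, b⁆ :=
  smul_lie t a b

lemma complexification_lie_smul (t : ℂ) (a b : ℂ ⊗[ℝ] L) : ⁅a, t • b⁆ = t • ⁅a, b⁆ :=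
  lie_smul t a b

lemma lie_incl (x y : L) : ⁅incl x, incl y⁆ = incl ⁅x, y⁆ := by
  simp only [incl, LieAlgebra.ExtendScalars.bracket_tmul, one_mul]

variable {J : L →ₗ[ℝ] L}

lemma residueModTPlus_lie_tPlus_tPlus (hJ : ∀ x, J (J x) = -x) (x y : L) :
    residueModTPlus J ⁅incl x - Complex.I • incl (J x), incl y - Complex.I • incl (J y)⁆ =
      nijenhuis J (J x) y := by
  simp only [complexification_sub_lie, complexification_lie_sub, complexification_smul_lie,
    complexification_lie_smul, lie_incl, smul_sub, smul_smul, Complex.I_mul_I, neg_smul, one_smul,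
    map_sub, map_neg, residueModTPlus_incl, residueModTPlus_I_smul_incl, nijenhuis, hJ, neg_lie]
  abel

lemma residueModTPlus_lie_incl_tPlus (z x : L) :
    residueModTPlus J ⁅incl z, incl x - Complex.I • incl (J x)⁆ = -(⁅z, J x⁆ - J ⁅z, x⁆) := by
  simp only [complexification_lie_sub, complexification_lie_smul, lie_incl, map_sub,
    residueModTPlus_incl, residueModTPlus_I_smul_incl, neg_sub]

lemma residueModTPlus_lie_tPlus_incl (x z : L) :
    residueModTPlus J ⁅incl x - Complex.I • incl (J x), incl z⁆ = ⁅z, J x⁆ - J ⁅z, x⁆ := by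
  simp only [complexification_sub_lie, complexification_smul_lie, lie_incl, map_sub,
    residueModTPlus_incl, residueModTPlus_I_smul_incl]
  rw [← lie_skew z x, ← lie_skew z (J x), map_neg]
  abel

end ComplexifiedBracket

/-- The first derived distribution `T⁺ + Dℂ` (with `D = span Im N^J`) is closed under
the bracket iff `D` is a subalgebra satisfying `[Z,JX] - J[Z,X] ∈ D` for all `Z ∈ D`, `X ∈ L`. -/
theorem first_derived_involutive_iff (L : Type*) [LieRing L] [LieAlgebra ℝ L]
    (J : L →ₗ[ℝ] L) (hJ : ∀ X, J (J X) = -X)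
    (N : L → L → L)
    (hN : ∀ X Y, N X Y = ⁅J X, J Y⁆ - J ⁅J X, Y⁆ - J ⁅X, J Y⁆ - ⁅X, Y⁆)
    (D : Submodule ℝ L)
    (hD : D = Submodule.span ℝ {z : L | ∃ X Y : L, z = N X Y})
    (S : Submodule ℂ (ℂ ⊗[ℝ] L))
    (hS : S = Submodule.span ℂ {z : ℂ ⊗[ℝ] L | ∃ X : L, z = incl X - Complex.I • incl (J X)} ⊔
        Submodule.span ℂ (incl '' (D : Set L))) :
    (∀ a ∈ S, ∀ b ∈ S, ⁅a, b⁆ ∈ S) ↔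
      ((∀ x ∈ D, ∀ y ∈ D, ⁅x, y⁆ ∈ D) ∧
        ∀ Z ∈ D, ∀ X : L, ⁅Z, J X⁆ - J ⁅Z, X⁆ ∈ D) := by
  obtain rfl : N = nijenhuis J := funext₂ hN
  have hJD : ∀ z ∈ D, J z ∈ D := fun z hz => hD ▸ map_mem_span_nijenhuis hJ (hD ▸ hz)
  have J_mem_iff (z : L) : J z ∈ D ↔ z ∈ D :=
    ⟨fun h => by simpa [hJ] using neg_mem (hJD _ h), hJD z⟩
  have hmem (z : ℂ ⊗[ℝ] L) : z ∈ S ↔ residueModTPlus J z ∈ D := by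
    rw [hS, span_tPlus_sup_span_incl_eq_residuePreimage hJ hJD, mem_residuePreimage]
  constructor
  · intro h
    have incl_mem (x : L) (hx : x ∈ D) : incl x ∈ S := by simpa [hmem] using hJD x hx
    have tPlus_mem (x : L) : incl x - Complex.I • incl (J x) ∈ S := by simp [hmem]
    refine ⟨fun x hx y hy => ?_, fun z hz x => ?_⟩
    · simpa [hmem, lie_incl, J_mem_iff] using h _ (incl_mem x hx) _ (incl_mem y hy)
    · have h' := (hmem _).1 (h _ (incl_mem z hz) _ (tPlus_mem x))
      rwa [residueModTPlus_lie_incl_tPlus, neg_mem_iff] at h'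
  · rintro ⟨hDsub, hDinv⟩ a ha b hb
    rw [hS, ← Submodule.span_union] at ha hb
    refine lie_mem_of_mem_span ?_ ha hb
    rintro _ (⟨x, rfl⟩ | ⟨z, hz, rfl⟩) _ (⟨y, rfl⟩ | ⟨w, hw, rfl⟩) <;> rw [hmem]
    · rw [residueModTPlus_lie_tPlus_tPlus hJ, hD]
      exact Submodule.subset_span ⟨J x, y, rfl⟩
    · rw [residueModTPlus_lie_tPlus_incl]
      exact hDinv w hw x
    · rw [residueModTPlus_lie_incl_tPlus, neg_mem_iff]
      exact hDinv z hz y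
    · rw [lie_incl, residueModTPlus_incl]
      exact hJD _ (hDsub z hz w hw)
end

section
/- Let g be a real Lie algebra and J : g → g linear with J² = -id and Nijenhuis torsion N^J. Suppose Im N^J (the span of all N^J(A,B)) is an ideal of g. Then [N, JX] - J[N, X] ∈ Im N^J for all N ∈ Im N^J and X ∈ g. -/
/-! The key point is that `J` preserves `Im N^J`, because `J N^J(A, B) = -N^J(JA, B)`
whenever `J² = -1`. Since `Im N^J` is an ideal, both `[N, JX]` and `[N, X]` lie in it, hence so
does `[N, JX] - J[N, X]`. -/

section Nijenhuis

variable {R L : Type*} [CommRing R] [LieRing L] [LieAlgebra R L]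

def nijenhuisTorsion (J : L →ₗ[R] L) (A B : L) : L :=
  ⁅J A, J B⁆ - J ⁅J A, B⁆ - J ⁅A, J B⁆ - ⁅A, B⁆

theorem map_nijenhuisTorsion {J : L →ₗ[R] L} (hJ : ∀ X, J (J X) = -X) (A B : L) :
    J (nijenhuisTorsion J A B) = -nijenhuisTorsion J (J A) B := by
  simp only [nijenhuisTorsion, map_sub, hJ, neg_lie, map_neg]
  abel

theorem span_nijenhuisTorsion_le_comap {J : L →ₗ[R] L} (hJ : ∀ X, J (J X) = -X) :
    Submodule.span R {z | ∃ A B, z = nijenhuisTorsion J A B} ≤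
      (Submodule.span R {z | ∃ A B, z = nijenhuisTorsion J A B}).comap J := by
  rw [Submodule.span_le]
  rintro _ ⟨A, B, rfl⟩
  rw [SetLike.mem_coe, Submodule.mem_comap, map_nijenhuisTorsion hJ]
  exact neg_mem (Submodule.subset_span ⟨J A, B, rfl⟩)

end Nijenhuis

/-- If the span of the image of the Nijenhuis torsion `N^J` is an ideal of `g`, then
`[N, JX] - J[N, X] ∈ Im N^J` for all `N ∈ Im N^J` and `X ∈ g`. -/
theorem ideal_implies_minimal (g : Type*) [LieRing g] [LieAlgebra ℝ g]
    (J : g →ₗ[ℝ] g) (hJ : ∀ X, J (J X) = -X)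
    (N : g → g → g)
    (hN : ∀ A B, N A B = ⁅J A, J B⁆ - J ⁅J A, B⁆ - J ⁅A, J B⁆ - ⁅A, B⁆)
    (D : Submodule ℝ g)
    (hD : D = Submodule.span ℝ {z : g | ∃ A B : g, z = N A B})
    (hIdeal : ∀ x ∈ D, ∀ Y : g, ⁅Y, x⁆ ∈ D) :
    ∀ Z ∈ D, ∀ X : g, ⁅Z, J X⁆ - J ⁅Z, X⁆ ∈ D := by
  obtain rfl : N = nijenhuisTorsion J := funext₂ hN
  have hJD : ∀ x ∈ D, J x ∈ D := by
    subst hD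
    exact fun x hx => span_nijenhuisTorsion_le_comap hJ hx
  intro Z hZ X
  have hZ_lie : ∀ Y, ⁅Z, Y⁆ ∈ D := fun Y => by
    rw [← lie_skew]
    exact neg_mem (hIdeal Z hZ Y)
  exact sub_mem (hZ_lie (J X)) (hJD _ (hZ_lie X))
end

section
/- Let L be a real Lie algebra, J linear with J² = -id, and define inductively D⁽¹⁾ = span Im N^J and D⁽ᵏ⁺¹⁾ = D⁽ᵏ⁾ + span{(L_U J)(X) : U ∈ D⁽ᵏ⁾, X ∈ L} + [D⁽ᵏ⁾, D⁽ᵏ⁾]. Then each D⁽ᵏ⁾ is J-stable: J(D⁽ᵏ⁾) ⊆ D⁽ᵏ⁾. -/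
/-!
`J` anticommutes with both operations that generate the flag: `J N^J(X, Y) = -N^J(JX, Y)` and
`J (L_U J)(X) = -(L_U J)(JX)`, so the span of the image of `N^J` and the span of
`{(L_U J)(X) : U ∈ D, X ∈ L}` are `J`-stable for any `D`. Brackets are not, but
`J[U, U'] = [U, JU'] - (L_U J)(U')` shows that `J[D, D]` lies in `[D, D] + span{(L_U J)(X)}`
as soon as `D` is `J`-stable; induction on `k` finishes the proof.
-/

namespace AlmostComplex

open Module.End Submodule

variable {R L : Type*} [CommRing R] [LieRing L] [LieAlgebra R L] (J : Module.End R L)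

def nijenhuis (X Y : L) : L := ⁅J X, J Y⁆ - J ⁅J X, Y⁆ - J ⁅X, J Y⁆ - ⁅X, Y⁆

/-- `lieDerivative J U X` is `(L_U J)(X)`. -/
def lieDerivative (U X : L) : L := ⁅U, J X⁆ - J ⁅U, X⁆

lemma apply_lie_eq_sub_lieDerivative (U V : L) : J ⁅U, V⁆ = ⁅U, J V⁆ - lieDerivative J U V := by
  simp only [lieDerivative, sub_sub_cancel]

variable {J}

lemma apply_nijenhuis (hJ : ∀ X, J (J X) = -X) (X Y : L) :
    J (nijenhuis J X Y) = -nijenhuis J (J X) Y := by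
  simp only [nijenhuis, map_sub, map_neg, hJ, neg_lie]
  abel

lemma apply_lieDerivative (hJ : ∀ X, J (J X) = -X) (U X : L) :
    J (lieDerivative J U X) = -lieDerivative J U (J X) := by
  simp only [lieDerivative, map_sub, hJ, lie_neg]
  abel

lemma span_range_nijenhuis_mem_invtSubmodule (hJ : ∀ X, J (J X) = -X) :
    span R {z | ∃ X Y : L, z = nijenhuis J X Y} ∈ J.invtSubmodule := by
  rw [mem_invtSubmodule, span_le]
  rintro _ ⟨X, Y, rfl⟩
  rw [SetLike.mem_coe, mem_comap, apply_nijenhuis hJ]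
  exact neg_mem (subset_span ⟨J X, Y, rfl⟩)

lemma span_lieDerivative_mem_invtSubmodule (hJ : ∀ X, J (J X) = -X) (D : Set L) :
    span R {z | ∃ U ∈ D, ∃ X : L, z = lieDerivative J U X} ∈ J.invtSubmodule := by
  rw [mem_invtSubmodule, span_le]
  rintro _ ⟨U, hU, X, rfl⟩
  rw [SetLike.mem_coe, mem_comap, apply_lieDerivative hJ]
  exact neg_mem (subset_span ⟨U, hU, J X, rfl⟩)

variable (J) in
def derivedFlagStep (D : Submodule R L) : Submodule R L :=
  D ⊔ span R {z | ∃ U ∈ D, ∃ X : L, z = lieDerivative J U X} ⊔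
    span R {z | ∃ x ∈ D, ∃ y ∈ D, z = ⁅x, y⁆}

lemma derivedFlagStep_mem_invtSubmodule (hJ : ∀ X, J (J X) = -X) {D : Submodule R L}
    (hD : D ∈ J.invtSubmodule) : derivedFlagStep J D ∈ J.invtSubmodule := by
  set A := span R {z | ∃ U ∈ D, ∃ X : L, z = lieDerivative J U X}
  have hDA : D ⊔ A ∈ J.invtSubmodule :=
    invtSubmodule.sup_mem hD (span_lieDerivative_mem_invtSubmodule hJ D)
  refine sup_le (le_trans ((mem_invtSubmodule J).1 hDA) (comap_mono le_sup_left)) ?_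
  rw [span_le]
  rintro _ ⟨x, hx, y, hy, rfl⟩
  rw [SetLike.mem_coe, mem_comap, apply_lie_eq_sub_lieDerivative]
  refine sub_mem (mem_sup_right (subset_span ⟨x, hx, J y, hD hy, rfl⟩)) ?_
  exact mem_sup_left (mem_sup_right (subset_span ⟨x, hx, y, rfl⟩))

end AlmostComplex

/-- Each term of the `J`-derived flag `D⁽¹⁾ = span Im N^J`,
`D⁽ᵏ⁺¹⁾ = D⁽ᵏ⁾ + span{(L_U J)X : U ∈ D⁽ᵏ⁾, X ∈ L} + [D⁽ᵏ⁾, D⁽ᵏ⁾]` is `J`-stable. -/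
theorem derived_flag_J_stable (L : Type*) [LieRing L] [LieAlgebra ℝ L]
    (J : L →ₗ[ℝ] L) (hJ : ∀ X, J (J X) = -X)
    (N : L → L → L)
    (hN : ∀ X Y, N X Y = ⁅J X, J Y⁆ - J ⁅J X, Y⁆ - J ⁅X, J Y⁆ - ⁅X, Y⁆)
    (D : ℕ → Submodule ℝ L)
    (hD1 : D 1 = Submodule.span ℝ {z : L | ∃ X Y : L, z = N X Y})
    (hDsucc : ∀ k, 1 ≤ k → D (k + 1) =
      D k ⊔ Submodule.span ℝ {z : L | ∃ U ∈ D k, ∃ X : L, z = ⁅U, J X⁆ - J ⁅U, X⁆} ⊔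
        Submodule.span ℝ {z : L | ∃ x ∈ D k, ∃ y ∈ D k, z = ⁅x, y⁆}) :
    ∀ k, 1 ≤ k → ∀ x ∈ D k, J x ∈ D k := by
  intro k hk
  induction k, hk using Nat.le_induction with
  | base =>
    rw [hD1, show N = AlmostComplex.nijenhuis J from funext₂ hN]
    exact AlmostComplex.span_range_nijenhuis_mem_invtSubmodule hJ
  | succ k hk ih =>
    rw [hDsucc k hk]
    exact AlmostComplex.derivedFlagStep_mem_invtSubmodule hJ ih
end
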